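/- arXiv:2211.03363 — 2 statements merged into one kernel-verified Lean document; each statement's English description precedes it below -/
import Mathlib

section
/- Let $K\ge 1$, let $t_0\le t$ be integers with $t-t_0\le E$ for an integer $E\ge 0$, and let $(\eta_i)_{i\ge 0}$ be a nonincreasing sequence of positive reals with $\eta_{t_0}\le 2\eta_t$. On a probability space, for each client $k\in\{1,\dots,K\}$ let $\theta_k^{t_0},\theta_k^{t_0+1},\dots,\theta_k^{t}$ be square-integrable random vectors in $\mathbb{R}^d$ satisfying $\theta_k^{i+1}=\theta_k^{i}-\eta_i g_k^{i}$ for random vectors $g_k^i$ with $\mathbb{E}\|g_k^i\|^2\le G^2$, and suppose all clients are synchronized at time $t_0$, i.e. $\theta_1^{t_0}=\dots=\theta_K^{t_0}$. Let $\bar\theta^t=\tfrac{1}{K}\sum_{k=1}^K\theta_k^t$. Then $\tfrac{1}{K}\sum_{k=1}^{K}\mathbb{E}\big\|\bar\theta^t-\theta_k^t\big\|^2\le 4E^2\eta_t^2G^2$. -/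
/-!
Since all clients start from the same model `θ^{t₀}`, the drift of client `k` is
`θ_k^{t₀} - θ_k^t = ∑_{i ∈ [t₀, t)} η_i g_k^i`. The mean minimises the sum of squared distances
to the clients, so the total deviation from the mean is at most the total drift
`∑_k ‖θ_k^{t₀} - θ_k^t‖²`. By Cauchy–Schwarz over the `t - t₀ ≤ E` steps and `η_i ≤ η_{t₀} ≤ 2 η_t`,
each drift has second moment at most `E² (2 η_t)² G²`.
-/

open MeasureTheory Finset

theorem sub_eq_sum_Ico_of_forall_succ_eq {M : Type*} [AddCommGroup M] {x u : ℕ → M} {m n : ℕ}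
    (hmn : m ≤ n) (hx : ∀ i, m ≤ i → i < n → x (i + 1) = x i - u i) :
    x m - x n = ∑ i ∈ Ico m n, u i := by
  rw [← neg_sub, ← sum_Ico_sub x hmn, ← sum_neg_distrib]
  refine sum_congr rfl fun i hi => ?_
  rw [mem_Ico] at hi
  rw [hx i hi.1 hi.2, sub_sub_cancel_left, neg_neg]

theorem sum_sub_mean_eq_zero {ι V : Type*} [Fintype ι] [AddCommGroup V] [Module ℝ V]
    (x : ι → V) :
    ∑ k, ((Fintype.card ι : ℝ)⁻¹ • ∑ k', x k' - x k) = 0 := by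
  rcases isEmpty_or_nonempty ι with hι | hι
  · simp
  · rw [sum_sub_distrib, sum_const, card_univ, ← Nat.cast_smul_eq_nsmul ℝ, smul_smul,
      mul_inv_cancel₀ (by positivity), one_smul, sub_self]

theorem sum_norm_sub_mean_sq_le {ι V : Type*} [Fintype ι] [NormedAddCommGroup V]
    [InnerProductSpace ℝ V] (x : ι → V) (c : V) :
    ∑ k, ‖(Fintype.card ι : ℝ)⁻¹ • ∑ k', x k' - x k‖ ^ 2 ≤ ∑ k, ‖c - x k‖ ^ 2 := by
  set m := (Fintype.card ι : ℝ)⁻¹ • ∑ k', x k'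
  have hsplit : ∀ k,
      ‖c - x k‖ ^ 2 = ‖c - m‖ ^ 2 + 2 * inner ℝ (c - m) (m - x k) + ‖m - x k‖ ^ 2 :=
    fun k => by rw [← norm_add_sq_real, sub_add_sub_cancel]
  have hcross : ∑ k, inner ℝ (c - m) (m - x k) = 0 := by
    rw [← inner_sum, sum_sub_mean_eq_zero, inner_zero_right]
  simp only [hsplit, sum_add_distrib, ← mul_sum, hcross, mul_zero, add_zero]
  exact le_add_of_nonneg_left (sum_nonneg fun _ _ => sq_nonneg _)

theorem norm_sum_sq_le_card_mul_sum_norm_sq {ι E : Type*} [SeminormedAddCommGroup E]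
    (s : Finset ι) (v : ι → E) :
    ‖∑ i ∈ s, v i‖ ^ 2 ≤ #s * ∑ i ∈ s, ‖v i‖ ^ 2 :=
  (pow_le_pow_left₀ (norm_nonneg _) (norm_sum_le _ _) 2).trans sq_sum_le_card_mul_sum_sq

section Integrals

variable {Ω : Type*} [MeasurableSpace Ω] {μ : Measure Ω}

theorem integral_norm_sum_sq_le {ι E : Type*} [NormedAddCommGroup E] {s : Finset ι}
    {f : ι → Ω → E} (hf : ∀ i ∈ s, MemLp (f i) 2 μ) {C : ℝ}
    (hC : ∀ i ∈ s, ∫ ω, ‖f i ω‖ ^ 2 ∂μ ≤ C) :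
    ∫ ω, ‖∑ i ∈ s, f i ω‖ ^ 2 ∂μ ≤ #s ^ 2 * C := by
  have hint : ∀ i ∈ s, Integrable (fun ω => ‖f i ω‖ ^ 2) μ :=
    fun i hi => (hf i hi).integrable_norm_pow two_ne_zero
  calc ∫ ω, ‖∑ i ∈ s, f i ω‖ ^ 2 ∂μ ≤ ∫ ω, #s * ∑ i ∈ s, ‖f i ω‖ ^ 2 ∂μ :=
        integral_mono_of_nonneg (.of_forall fun _ => by positivity)
          ((integrable_finsetSum s hint).const_mul _)
          (.of_forall fun ω => norm_sum_sq_le_card_mul_sum_norm_sq s (f · ω))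
    _ = #s * ∑ i ∈ s, ∫ ω, ‖f i ω‖ ^ 2 ∂μ := by
        rw [integral_const_mul, integral_finsetSum s hint]
    _ ≤ #s * ∑ _i ∈ s, C := by gcongr with i hi; exact hC i hi
    _ = #s ^ 2 * C := by rw [sum_const, nsmul_eq_mul]; ring

theorem integral_norm_sub_sq_le_of_forall_succ_eq_sub_smul {E : Type*} [NormedAddCommGroup E]
    [NormedSpace ℝ E] {x g : ℕ → Ω → E} {η : ℕ → ℝ} {m n : ℕ} (hmn : m ≤ n)
    (hx : ∀ i, m ≤ i → i < n → x (i + 1) = fun ω => x i ω - η i • g i ω)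
    (hgL2 : ∀ i, m ≤ i → i < n → MemLp (g i) 2 μ) {A B : ℝ}
    (hη : ∀ i, m ≤ i → i < n → η i ^ 2 ≤ A)
    (hg : ∀ i, m ≤ i → i < n → ∫ ω, ‖g i ω‖ ^ 2 ∂μ ≤ B) :
    ∫ ω, ‖x m ω - x n ω‖ ^ 2 ∂μ ≤ ((n - m : ℕ) : ℝ) ^ 2 * (A * B) := by
  have hdrift : ∀ ω, x m ω - x n ω = ∑ i ∈ Ico m n, η i • g i ω := fun ω => by
    simpa only [Pi.sub_apply, Finset.sum_apply, Pi.smul_apply] using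
      congrFun (sub_eq_sum_Ico_of_forall_succ_eq hmn hx) ω
  simp only [hdrift, ← Nat.card_Ico]
  refine integral_norm_sum_sq_le (f := fun i ω => η i • g i ω)
    (fun i hi => (hgL2 i (mem_Ico.1 hi).1 (mem_Ico.1 hi).2).const_smul (η i)) fun i hi => ?_
  rw [mem_Ico] at hi
  simp only [norm_smul, mul_pow, Real.norm_eq_abs, sq_abs, integral_const_mul]
  exact mul_le_mul (hη i hi.1 hi.2) (hg i hi.1 hi.2) (integral_nonneg fun _ => by positivity)
    ((sq_nonneg _).trans (hη i hi.1 hi.2))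

theorem sum_integral_norm_sub_mean_sq_le {ι E : Type*} [Fintype ι] [NormedAddCommGroup E]
    [InnerProductSpace ℝ E] {x : ι → Ω → E} (hx : ∀ k, MemLp (x k) 2 μ) {c : Ω → E}
    (hc : MemLp c 2 μ) :
    ∑ k, ∫ ω, ‖(Fintype.card ι : ℝ)⁻¹ • ∑ k', x k' ω - x k ω‖ ^ 2 ∂μ ≤
      ∑ k, ∫ ω, ‖c ω - x k ω‖ ^ 2 ∂μ := by
  have hmean : ∀ k,
      Integrable (fun ω => ‖(Fintype.card ι : ℝ)⁻¹ • ∑ k', x k' ω - x k ω‖ ^ 2) μ := fun k => by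
    have h : MemLp ((Fintype.card ι : ℝ)⁻¹ • ∑ k', x k' - x k) 2 μ :=
      ((memLp_finsetSum' _ fun k' _ => hx k').const_smul _).sub (hx k)
    simpa only [Pi.sub_apply, Pi.smul_apply, Finset.sum_apply] using
      h.integrable_norm_pow two_ne_zero
  have hc' : ∀ k, Integrable (fun ω => ‖c ω - x k ω‖ ^ 2) μ :=
    fun k => (hc.sub (hx k)).integrable_norm_pow two_ne_zero
  rw [← integral_finsetSum _ fun k _ => hmean k, ← integral_finsetSum _ fun k _ => hc' k]
  exact integral_mono (integrable_finsetSum _ fun k _ => hmean k)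
    (integrable_finsetSum _ fun k _ => hc' k) fun ω => sum_norm_sub_mean_sq_le (x · ω) (c ω)

end Integrals

theorem stmt_7_general {Ω : Type*} [MeasurableSpace Ω] (P : Measure Ω)
    (d K : ℕ) (hK : 1 ≤ K) (t₀ t E : ℕ) (ht₀ : t₀ ≤ t) (htE : t - t₀ ≤ E)
    (η : ℕ → ℝ) (hηpos : ∀ i, 0 < η i) (hηmono : ∀ i j, i ≤ j → η j ≤ η i)
    (hη2 : η t₀ ≤ 2 * η t) (G : ℝ)
    (θ g : Fin K → ℕ → Ω → EuclideanSpace ℝ (Fin d))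
    (hθL2 : ∀ k i, MemLp (θ k i) 2 P) (hgL2 : ∀ k i, MemLp (g k i) 2 P)
    (hupd : ∀ k, ∀ i, t₀ ≤ i → i < t →
      θ k (i + 1) = fun ω => θ k i ω - η i • g k i ω)
    (hg : ∀ k, ∀ i, t₀ ≤ i → i < t → ∫ ω, ‖g k i ω‖ ^ 2 ∂P ≤ G ^ 2)
    (hsync : ∀ k k', θ k t₀ = θ k' t₀) :
    (1 / (K : ℝ)) *
        ∑ k, ∫ ω, ‖(1 / (K : ℝ)) • (∑ k', θ k' t ω) - θ k t ω‖ ^ 2 ∂P ≤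
      4 * (E : ℝ) ^ 2 * (η t) ^ 2 * G ^ 2 := by
  let k₀ : Fin K := ⟨0, hK⟩
  have hdrift : ∀ k, ∫ ω, ‖θ k₀ t₀ ω - θ k t ω‖ ^ 2 ∂P ≤
      ((t - t₀ : ℕ) : ℝ) ^ 2 * (η t₀ ^ 2 * G ^ 2) := fun k => by
    rw [hsync k₀ k]
    exact integral_norm_sub_sq_le_of_forall_succ_eq_sub_smul ht₀ (hupd k)
      (fun i _ _ => hgL2 k i) (fun i hi _ => pow_le_pow_left₀ (hηpos i).le (hηmono _ _ hi) 2) (hg k)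
  have hdev := sum_integral_norm_sub_mean_sq_le (fun k => hθL2 k t) (hθL2 k₀ t₀)
  rw [Fintype.card_fin, ← one_div] at hdev
  calc (1 / (K : ℝ)) * ∑ k, ∫ ω, ‖(1 / (K : ℝ)) • (∑ k', θ k' t ω) - θ k t ω‖ ^ 2 ∂P
      ≤ (1 / (K : ℝ)) * ∑ _k : Fin K, ((t - t₀ : ℕ) : ℝ) ^ 2 * (η t₀ ^ 2 * G ^ 2) := by
        gcongr (1 / (K : ℝ)) * ?_
        exact hdev.trans (sum_le_sum fun k _ => hdrift k)
    _ = ((t - t₀ : ℕ) : ℝ) ^ 2 * η t₀ ^ 2 * G ^ 2 := by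
        rw [sum_const, card_univ, Fintype.card_fin, nsmul_eq_mul]
        field_simp
    _ ≤ (E : ℝ) ^ 2 * (2 * η t) ^ 2 * G ^ 2 := by
        gcongr
        exact (hηpos t₀).le
    _ = 4 * (E : ℝ) ^ 2 * (η t) ^ 2 * G ^ 2 := by ring

/-- Client-drift bound (equation (16) of the paper): between two aggregation
rounds separated by at most `E` local SGD epochs with stochastic gradients of
second moment bounded by `G^2`, the average squared deviation of the local
models from their mean is at most `4 E^2 (η t)^2 G^2`. -/
theorem stmt_7 {Ω : Type*} [MeasurableSpace Ω] (P : Measure Ω) [IsProbabilityMeasure P]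
    (d K : ℕ) (hK : 1 ≤ K) (t₀ t E : ℕ) (ht₀ : t₀ ≤ t) (htE : t - t₀ ≤ E)
    (η : ℕ → ℝ) (hηpos : ∀ i, 0 < η i) (hηmono : ∀ i j, i ≤ j → η j ≤ η i)
    (hη2 : η t₀ ≤ 2 * η t) (G : ℝ)
    (θ g : Fin K → ℕ → Ω → EuclideanSpace ℝ (Fin d))
    (hθL2 : ∀ k i, MemLp (θ k i) 2 P) (hgL2 : ∀ k i, MemLp (g k i) 2 P)
    (hupd : ∀ k, ∀ i, t₀ ≤ i → i < t →
      θ k (i + 1) = fun ω => θ k i ω - η i • g k i ω)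
    (hg : ∀ k, ∀ i, t₀ ≤ i → i < t → ∫ ω, ‖g k i ω‖ ^ 2 ∂P ≤ G ^ 2)
    (hsync : ∀ k k', θ k t₀ = θ k' t₀) :
    (1 / (K : ℝ)) *
        ∑ k, ∫ ω, ‖(1 / (K : ℝ)) • (∑ k', θ k' t ω) - θ k t ω‖ ^ 2 ∂P ≤
      4 * (E : ℝ) ^ 2 * (η t) ^ 2 * G ^ 2 :=
  stmt_7_general P d K hK t₀ t E ht₀ htE η hηpos hηmono hη2 G θ g hθL2 hgL2 hupd hg hsync
end

section
/- Let $d\ge 1$, $K\ge 1$ and $C\ge 1$ be integers. For $k=1,\dots,K$ let $f_k:\mathbb{R}^d\to\mathbb{R}$ be differentiable, $L$-smooth (gradient $L$-Lipschitz) and $\mu$-strongly convex, set $F=\tfrac{1}{K}\sum_{k=1}^K f_k$, let $\theta^*$ be the minimizer of $F$ with $F^*=F(\theta^*)$, let $f_k^*=\inf f_k$, and define the heterogeneity gap $\Gamma=F^*-\tfrac{1}{K}\sum_{k=1}^K f_k^*$. Let $\tilde\theta_c,\theta_1,\dots,\theta_K,\tilde\theta_1,\dots,\tilde\theta_C\in\mathbb{R}^d$,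 let $W_1,\dots,W_C$ be real numbers, set $\bar g=\tfrac{1}{K}\sum_{k=1}^K\nabla f_k(\theta_k)$, and let $0<\eta\le\tfrac{1}{6L}$. Then $\Big\|\tilde\theta_c+\sum_{j=1}^C W_j\tilde\theta_j-\eta\bar g-\theta^*\Big\|^2\le(2-\mu\eta)\|\tilde\theta_c-\theta^*\|^2+3\Big\|\sum_{j=1}^C W_j\tilde\theta_j\Big\|^2+\tfrac{2}{K}\sum_{k=1}^K\|\tilde\theta_c-\theta_k\|^2+6L\eta^2\Gamma-\tfrac{5\eta}{3}\big(F(\tilde\theta_c)-F^*\big)$. -/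
/-!
Write `v = θc - θ*` and `S = ∑ j, W j • θ̃ j`. Young's inequality splits off `3‖S‖²`, leaving
`3/2 ‖v - η ḡ‖² = 3/2 (‖v‖² - 2η⟪ḡ, v⟫ + η²‖ḡ‖²)`. For each client, the descent lemma at `θ k`
together with convexity gives `⟪∇f_k(θ k), v⟫ ≥ f_k(θc) - f_k(θ*) - L/2 ‖θc - θ k‖²`, while
smoothness and `‖∇f_k(θc)‖² ≤ 2L (f_k(θc) - f_k*)` give
`‖∇f_k(θ k)‖² ≤ 4L (f_k(θc) - f_k*) + 2L² ‖θc - θ k‖²`. Averaging over the clients (Jensen for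
`‖ḡ‖²`) and using `μη ≤ Lη ≤ 1/6`, every coefficient lands below the claimed one.
-/

open Real RealInnerProductSpace Set NNReal

section Smooth

variable {E : Type*} [NormedAddCommGroup E] [InnerProductSpace ℝ E] [CompleteSpace E]
  {f : E → ℝ}

theorem hasDerivAt_comp_add_smul (hf : Differentiable ℝ f) (x u : E) (t : ℝ) :
    HasDerivAt (fun s : ℝ => f (x + s • u)) ⟪gradient f (x + t • u), u⟫ t := by
  have hline : HasDerivAt (fun s : ℝ => x + s • u) u t := by
    simpa using ((hasDerivAt_id t).smul_const u).const_add x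
  have hgrad := hasGradientAt_iff_hasFDerivAt.mp (hf (x + t • u)).hasGradientAt
  simpa [InnerProductSpace.toDual_apply_apply, Function.comp_def] using
    hgrad.comp_hasDerivAt t hline

theorem ConvexOn.add_inner_gradient_le (hf : Differentiable ℝ f) (hc : ConvexOn ℝ univ f)
    (x y : E) : f x + ⟪gradient f x, y - x⟫ ≤ f y := by
  have hline : ConvexOn ℝ univ (fun s : ℝ => f (x + s • (y - x))) := by
    simpa [Function.comp_def, AffineMap.lineMap_apply, add_comm] using
      hc.comp_affineMap (AffineMap.lineMap x y : ℝ →ᵃ[ℝ] E)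
  have hderiv : HasDerivAt (fun s : ℝ => f (x + s • (y - x))) ⟪gradient f x, y - x⟫ 0 := by
    simpa using hasDerivAt_comp_add_smul hf x (y - x) 0
  have hslope := hline.le_slope_of_hasDerivAt (mem_univ 0) (mem_univ 1) one_pos hderiv
  simp only [slope_def_field, zero_smul, add_zero, one_smul, add_sub_cancel, sub_zero,
    div_one] at hslope
  linarith

theorem image_le_add_inner_gradient_add_sq (hf : Differentiable ℝ f) {L : ℝ≥0}
    (hL : LipschitzWith L (gradient f)) (x y : E) :
    f y ≤ f x + ⟪gradient f x, y - x⟫ + L / 2 * ‖y - x‖ ^ 2 := by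
  set u := y - x
  -- for `t ≥ 0`, `φ' t = ⟪∇f (x + t u) - ∇f x, u⟫ - L t ‖u‖² ≤ 0` by Lipschitz continuity of `∇f`
  set φ : ℝ → ℝ := fun t => f (x + t • u) - t * ⟪gradient f x, u⟫ - L / 2 * t ^ 2 * ‖u‖ ^ 2
  have hφ' : ∀ t, HasDerivAt φ
      (⟪gradient f (x + t • u), u⟫ - ⟪gradient f x, u⟫ - L * t * ‖u‖ ^ 2) t := by
    intro t
    have := ((hasDerivAt_comp_add_smul hf x u t).sub
      ((hasDerivAt_id t).mul_const ⟪gradient f x, u⟫)).sub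
      (((hasDerivAt_pow 2 t).const_mul (L / 2 : ℝ)).mul_const (‖u‖ ^ 2))
    exact this.congr_deriv (by simp only [Nat.cast_ofNat]; ring)
  have hanti : AntitoneOn φ (Ici 0) := by
    refine antitoneOn_of_hasDerivWithinAt_nonpos (convex_Ici 0)
      (fun t _ => (hφ' t).continuousAt.continuousWithinAt)
      (fun t _ => (hφ' t).hasDerivWithinAt) fun t ht => ?_
    rw [interior_Ici, mem_Ioi] at ht
    have hlip : ‖gradient f (x + t • u) - gradient f x‖ ≤ L * (t * ‖u‖) := by
      simpa [dist_eq_norm, norm_smul, abs_of_pos ht] using hL.dist_le_mul (x + t • u) x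
    have := real_inner_le_norm (gradient f (x + t • u) - gradient f x) u
    rw [inner_sub_left] at this
    nlinarith [norm_nonneg u]
  have := hanti (mem_Ici.2 le_rfl) (mem_Ici.2 zero_le_one) zero_le_one
  simp only [φ, one_smul, zero_smul, add_zero, u, add_sub_cancel] at this
  linarith

theorem norm_gradient_sq_le_two_mul_sub_iInf (hf : Differentiable ℝ f) {L : ℝ≥0} (hL0 : 0 < L)
    (hL : LipschitzWith L (gradient f)) (hbdd : BddBelow (range f)) (x : E) :
    ‖gradient f x‖ ^ 2 ≤ 2 * L * (f x - ⨅ y, f y) := by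
  -- one gradient step of length `1 / L` decreases `f` by at least `‖∇f x‖² / (2L)`
  have hstep := image_le_add_inner_gradient_add_sq hf hL x (x - (L : ℝ)⁻¹ • gradient f x)
  have hinf : ⨅ y, f y ≤ f (x - (L : ℝ)⁻¹ • gradient f x) := ciInf_le hbdd _
  rw [sub_sub_cancel_left, inner_neg_right, real_inner_smul_right, real_inner_self_eq_norm_sq,
    norm_neg, norm_smul, mul_pow, norm_inv, NNReal.norm_eq, inv_pow] at hstep
  have hL0' : (0 : ℝ) < L := hL0
  have hcancel : (L : ℝ) / 2 * ((L : ℝ) ^ 2)⁻¹ = (L : ℝ)⁻¹ / 2 := by field_simp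
  rw [← mul_assoc, hcancel] at hstep
  have := mul_le_mul_of_nonneg_left (hinf.trans hstep) (by positivity : (0 : ℝ) ≤ 2 * L)
  field_simp at this
  nlinarith

theorem StrongConvexOn.le_of_lipschitzWith_gradient {μ : ℝ} (hf : Differentiable ℝ f)
    {L : ℝ≥0} (hL : LipschitzWith L (gradient f)) (hsc : StrongConvexOn univ μ f) {x y : E}
    (hxy : x ≠ y) : μ ≤ L := by
  -- compare `f x + f y` with `2 f m` at the midpoint `m`, from both sides
  set m : E := (1 / 2 : ℝ) • x + (1 / 2 : ℝ) • y
  have hmid := hsc.2 (mem_univ x) (mem_univ y) (by norm_num : (0 : ℝ) ≤ 1 / 2)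
    (by norm_num : (0 : ℝ) ≤ 1 / 2) (by norm_num)
  have hx := image_le_add_inner_gradient_add_sq hf hL m x
  have hy := image_le_add_inner_gradient_add_sq hf hL m y
  have hxm : x - m = (1 / 2 : ℝ) • (x - y) := by module
  have hym : y - m = -((1 / 2 : ℝ) • (x - y)) := by module
  rw [hxm] at hx
  rw [hym, inner_neg_right, norm_neg] at hy
  rw [norm_smul, mul_pow] at hx hy
  have hpos : 0 < ‖x - y‖ ^ 2 := by positivity [sub_ne_zero.2 hxy]
  simp only [smul_eq_mul] at hmid
  norm_num at hx hy
  nlinarith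

theorem ConvexOn.sub_sub_sq_le_inner_gradient (hf : Differentiable ℝ f)
    (hc : ConvexOn ℝ univ f) {L : ℝ≥0} (hL : LipschitzWith L (gradient f)) (x y z : E) :
    f y - f z - L / 2 * ‖y - x‖ ^ 2 ≤ ⟪gradient f x, y - z⟫ := by
  have hup := image_le_add_inner_gradient_add_sq hf hL x y
  have hlow := hc.add_inner_gradient_le hf x z
  have hsplit : y - z = (y - x) - (z - x) := by abel
  rw [hsplit, inner_sub_right]
  linarith

theorem norm_gradient_sq_le_of_lipschitzWith (hf : Differentiable ℝ f) {L : ℝ≥0} (hL0 : 0 < L)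
    (hL : LipschitzWith L (gradient f)) (hbdd : BddBelow (range f)) (x y : E) :
    ‖gradient f x‖ ^ 2 ≤ 4 * L * (f y - ⨅ z, f z) + 2 * L ^ 2 * ‖y - x‖ ^ 2 := by
  have hgy := norm_gradient_sq_le_two_mul_sub_iInf hf hL0 hL hbdd y
  have hlip : ‖gradient f x - gradient f y‖ ≤ L * ‖y - x‖ := by
    simpa [dist_eq_norm, norm_sub_rev y x] using hL.dist_le_mul x y
  have htri : ‖gradient f x‖ ≤ ‖gradient f y‖ + L * ‖y - x‖ :=
    (norm_le_norm_add_norm_sub' _ (gradient f y)).trans (by linarith)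
  nlinarith [norm_nonneg (gradient f x), sq_nonneg (‖gradient f y‖ - L * ‖y - x‖)]

end Smooth

section

variable {E : Type*} [NormedAddCommGroup E] [InnerProductSpace ℝ E]

theorem norm_add_sq_le_of_pos (a b : E) {ε : ℝ} (hε : 0 < ε) :
    ‖a + b‖ ^ 2 ≤ (1 + ε) * ‖a‖ ^ 2 + (1 + ε⁻¹) * ‖b‖ ^ 2 := by
  have hinner := real_inner_le_norm a b
  have hamgm : 2 * (‖a‖ * ‖b‖) ≤ ε * ‖a‖ ^ 2 + ε⁻¹ * ‖b‖ ^ 2 := by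
    have := sq_nonneg (ε * ‖a‖ - ‖b‖)
    have hε' : ε * ε⁻¹ = 1 := mul_inv_cancel₀ hε.ne'
    nlinarith [inv_pos.2 hε]
  rw [norm_add_sq_real]
  linarith

theorem norm_sum_sq_le_card_mul {F ι : Type*} [SeminormedAddCommGroup F] (s : Finset ι)
    (g : ι → F) :
    ‖∑ k ∈ s, g k‖ ^ 2 ≤ s.card * ∑ k ∈ s, ‖g k‖ ^ 2 :=
  (pow_le_pow_left₀ (norm_nonneg _) (norm_sum_le _ _) 2).trans (sq_sum_le_card_mul_sum_sq ..)

end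

section Family

variable {E ι : Type*} [NormedAddCommGroup E] [InnerProductSpace ℝ E] [CompleteSpace E]
  [Fintype ι] {f : ι → E → ℝ} (hf : ∀ k, Differentiable ℝ (f k)) {L : ℝ≥0}
  (hL : ∀ k, LipschitzWith L (gradient (f k)))
include hf hL

theorem ConvexOn.sum_sub_sub_sq_le_inner_smul_sum_gradient
    (hc : ∀ k, ConvexOn ℝ univ (f k)) {c : ℝ} (hc0 : 0 ≤ c) (x : ι → E) (y z : E) :
    c * ∑ k, f k y - c * ∑ k, f k z - L / 2 * (c * ∑ k, ‖y - x k‖ ^ 2) ≤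
      ⟪c • ∑ k, gradient (f k) (x k), y - z⟫ := by
  have hsum := Finset.sum_le_sum fun k (_ : k ∈ Finset.univ) =>
    (hc k).sub_sub_sq_le_inner_gradient (hf k) (hL k) (x k) y z
  rw [Finset.sum_sub_distrib, Finset.sum_sub_distrib, ← Finset.mul_sum, ← sum_inner] at hsum
  rw [real_inner_smul_left]
  nlinarith

theorem norm_smul_sum_gradient_sq_le (hL0 : 0 < L) (hbdd : ∀ k, BddBelow (range (f k)))
    (x : ι → E) (y : E) :
    ‖(1 / (Fintype.card ι : ℝ)) • ∑ k, gradient (f k) (x k)‖ ^ 2 ≤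
      4 * L * ((1 / (Fintype.card ι : ℝ)) * ∑ k, f k y
        - (1 / (Fintype.card ι : ℝ)) * ∑ k, ⨅ z, f k z)
      + 2 * L ^ 2 * ((1 / (Fintype.card ι : ℝ)) * ∑ k, ‖y - x k‖ ^ 2) := by
  set c : ℝ := 1 / (Fintype.card ι : ℝ)
  have hsum := Finset.sum_le_sum fun k (_ : k ∈ Finset.univ) =>
    norm_gradient_sq_le_of_lipschitzWith (hf k) hL0 (hL k) (hbdd k) (x k) y
  rw [Finset.sum_add_distrib, ← Finset.mul_sum, ← Finset.mul_sum, Finset.sum_sub_distrib] at hsum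
  have hjensen : ‖c • ∑ k, gradient (f k) (x k)‖ ^ 2 ≤ c * ∑ k, ‖gradient (f k) (x k)‖ ^ 2 := by
    rcases isEmpty_or_nonempty ι with hι | hι
    · simp
    have hcard : c * Fintype.card ι = 1 := by simp [c]
    calc ‖c • ∑ k, gradient (f k) (x k)‖ ^ 2
        = c ^ 2 * ‖∑ k, gradient (f k) (x k)‖ ^ 2 := by
          rw [norm_smul, mul_pow, Real.norm_eq_abs, sq_abs]
      _ ≤ c ^ 2 * (Fintype.card ι * ∑ k, ‖gradient (f k) (x k)‖ ^ 2) := by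
          gcongr; exact norm_sum_sq_le_card_mul _ _
      _ = c * ∑ k, ‖gradient (f k) (x k)‖ ^ 2 := by
          linear_combination (c * ∑ k, ‖gradient (f k) (x k)‖ ^ 2) * hcard
  have hc0 : 0 ≤ c := by positivity
  nlinarith

end Family

theorem stmt_12_general (d K C : ℕ) (hd : 1 ≤ d) (hK : 1 ≤ K)
    (L μ : ℝ) (hL : 0 < L) (hμ : 0 < μ)
    (f : Fin K → EuclideanSpace ℝ (Fin d) → ℝ)
    (hdiff : ∀ k, Differentiable ℝ (f k))
    (hsmooth : ∀ k, LipschitzWith L.toNNReal (gradient (f k)))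
    (hconv : ∀ k, StrongConvexOn Set.univ μ (f k))
    (hbdd : ∀ k, BddBelow (Set.range (f k)))
    (F : EuclideanSpace ℝ (Fin d) → ℝ)
    (hF : F = fun x => (1 / (K : ℝ)) * ∑ k, f k x)
    (θstar : EuclideanSpace ℝ (Fin d)) (hmin : ∀ x, F θstar ≤ F x)
    (Γ : ℝ) (hΓ : Γ = F θstar - (1 / (K : ℝ)) * ∑ k, ⨅ x, f k x)
    (θc : EuclideanSpace ℝ (Fin d)) (θ : Fin K → EuclideanSpace ℝ (Fin d))
    (θtild : Fin C → EuclideanSpace ℝ (Fin d)) (W : Fin C → ℝ)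
    (gbar : EuclideanSpace ℝ (Fin d))
    (hgbar : gbar = (1 / (K : ℝ)) • ∑ k, gradient (f k) (θ k))
    (η : ℝ) (hη0 : 0 < η) (hη : η ≤ 1 / (6 * L)) :
    ‖θc + (∑ j, W j • θtild j) - η • gbar - θstar‖ ^ 2 ≤
      (2 - μ * η) * ‖θc - θstar‖ ^ 2 + 3 * ‖∑ j, W j • θtild j‖ ^ 2
        + (2 / (K : ℝ)) * ∑ k, ‖θc - θ k‖ ^ 2
        + 6 * L * η ^ 2 * Γ - (5 * η / 3) * (F θc - F θstar) := by
  have hLη : L * η ≤ 1 / 6 := by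
    rw [le_div_iff₀ (by positivity)] at hη
    linarith
  have hμL : μ ≤ L := by
    simpa [Real.coe_toNNReal _ hL.le] using (hconv ⟨0, hK⟩).le_of_lipschitzWith_gradient
      (hdiff _) (hsmooth _)
      (x := 0) (y := EuclideanSpace.single ⟨0, hd⟩ 1) (by simp [eq_comm])
  have hinner := ConvexOn.sum_sub_sub_sq_le_inner_smul_sum_gradient hdiff hsmooth
    (fun k => (hconv k).convexOn fun r => by positivity) (by positivity : (0 : ℝ) ≤ 1 / K)
    θ θc θstar
  have hgrad := norm_smul_sum_gradient_sq_le hdiff hsmooth (by simpa using hL) hbdd θ θc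
  rw [Fintype.card_fin] at hgrad
  rw [Real.coe_toNNReal _ hL.le] at hinner hgrad
  have hgap := hmin θc
  have hsplit : θc + (∑ j, W j • θtild j) - η • gbar - θstar
      = (θc - θstar - η • gbar) + ∑ j, W j • θtild j := by abel
  rw [hsplit]
  subst hF hΓ hgbar
  set v := θc - θstar
  set g := (1 / (K : ℝ)) • ∑ k, gradient (f k) (θ k)
  set R := (1 / (K : ℝ)) * ∑ k, ‖θc - θ k‖ ^ 2
  calc ‖(v - η • g) + ∑ j, W j • θtild j‖ ^ 2
    _ ≤ 3 / 2 * ‖v - η • g‖ ^ 2 + 3 * ‖∑ j, W j • θtild j‖ ^ 2 := by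
      have := norm_add_sq_le_of_pos (v - η • g) (∑ j, W j • θtild j) (ε := 1 / 2) (by norm_num)
      norm_num at this
      linarith
    _ = 3 / 2 * (‖v‖ ^ 2 - 2 * η * ⟪g, v⟫ + η ^ 2 * ‖g‖ ^ 2)
        + 3 * ‖∑ j, W j • θtild j‖ ^ 2 := by
      rw [norm_sub_sq_real, real_inner_smul_right, norm_smul, mul_pow, Real.norm_eq_abs, sq_abs,
        real_inner_comm]
      ring
    _ ≤ _ := by
      simp only at hgap ⊢
      have hR : 0 ≤ R := by positivity
      have hRK : 2 / (K : ℝ) * ∑ k, ‖θc - θ k‖ ^ 2 = 2 * R := by ring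
      have hvcoef : (μ * η - 1 / 2) * ‖v‖ ^ 2 ≤ 0 :=
        mul_nonpos_of_nonpos_of_nonneg (by nlinarith) (sq_nonneg _)
      have hRcoef : (3 / 2 * (L * η) + 3 * (L * η) ^ 2 - 2) * R ≤ 0 :=
        mul_nonpos_of_nonpos_of_nonneg (by nlinarith [mul_nonneg hL.le hη0.le]) hR
      have hgapcoef : (6 * (L * η) - 4 / 3) * (η * (1 / (K : ℝ) * ∑ k, f k θc
          - 1 / (K : ℝ) * ∑ k, f k θstar)) ≤ 0 :=
        mul_nonpos_of_nonpos_of_nonneg (by linarith) (mul_nonneg hη0.le (by linarith))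
      rw [hRK]
      linarith [mul_le_mul_of_nonneg_left hinner hη0.le,
        mul_le_mul_of_nonneg_left hgrad (sq_nonneg η)]

/-- Lemma 2 of the paper (bound on the deterministic term T1): for `L`-smooth,
`μ`-strongly convex local losses `f k` with global objective
`F = (1/K) ∑ k f k`, minimizer `θ*`, heterogeneity gap
`Γ = F* - (1/K) ∑ k (inf f k)`, averaged true gradient `ḡ`, and step size
`0 < η ≤ 1/(6L)`, the stated inequality holds. -/
theorem stmt_12 (d K C : ℕ) (hd : 1 ≤ d) (hK : 1 ≤ K) (hC : 1 ≤ C)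
    (L μ : ℝ) (hL : 0 < L) (hμ : 0 < μ)
    (f : Fin K → EuclideanSpace ℝ (Fin d) → ℝ)
    (hdiff : ∀ k, Differentiable ℝ (f k))
    (hsmooth : ∀ k, LipschitzWith L.toNNReal (gradient (f k)))
    (hconv : ∀ k, StrongConvexOn Set.univ μ (f k))
    (hbdd : ∀ k, BddBelow (Set.range (f k)))
    (F : EuclideanSpace ℝ (Fin d) → ℝ)
    (hF : F = fun x => (1 / (K : ℝ)) * ∑ k, f k x)
    (θstar : EuclideanSpace ℝ (Fin d)) (hmin : ∀ x, F θstar ≤ F x)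
    (Γ : ℝ) (hΓ : Γ = F θstar - (1 / (K : ℝ)) * ∑ k, ⨅ x, f k x)
    (θc : EuclideanSpace ℝ (Fin d)) (θ : Fin K → EuclideanSpace ℝ (Fin d))
    (θtild : Fin C → EuclideanSpace ℝ (Fin d)) (W : Fin C → ℝ)
    (gbar : EuclideanSpace ℝ (Fin d))
    (hgbar : gbar = (1 / (K : ℝ)) • ∑ k, gradient (f k) (θ k))
    (η : ℝ) (hη0 : 0 < η) (hη : η ≤ 1 / (6 * L)) :
    ‖θc + (∑ j, W j • θtild j) - η • gbar - θstar‖ ^ 2 ≤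
      (2 - μ * η) * ‖θc - θstar‖ ^ 2 + 3 * ‖∑ j, W j • θtild j‖ ^ 2
        + (2 / (K : ℝ)) * ∑ k, ‖θc - θ k‖ ^ 2
        + 6 * L * η ^ 2 * Γ - (5 * η / 3) * (F θc - F θstar) :=
  stmt_12_general d K C hd hK L μ hL hμ f hdiff hsmooth hconv hbdd F hF θstar hmin Γ hΓ θc θ θtild W
    gbar hgbar η hη0 hη
end
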